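/- arXiv:2509.16911 — 7 statements merged into one kernel-verified Lean document; each statement's English description precedes it below -/
import Mathlib

section
/- Let p be an odd prime and u : F_p^n → F_p a function written in algebraic normal form u(x) = Σ a_{j_1,…,j_n} x_1^{j_1}⋯x_n^{j_n} with 0 ≤ j_i ≤ p−1. Suppose 2c·u(c^{-1}x) = (c+1)u(x) + (c−1)u(−x) for all c ∈ F_p^* and x ∈ F_p^n. Then u = v + w, where v satisfies v(cx) = v(x) for all c ∈ F_p^* (v is a (p−1)-form up to constant) and w satisfies w(cx) = c·w(x) for all c ∈ F_p^* (w is a 1-form); concretely, every nonconstant monomial of u of total degree d has d ≡ 0 mod (p−1) (contributing to v) or d ≡ 1 mod (p−1) (contributing to w). -/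
open MvPolynomial

/-- Let `p` be an odd prime and `u : F_p^n → F_p` given in algebraic
normal form (a polynomial with all exponents `≤ p − 1`). If
`2c·u(c⁻¹x) = (c+1)u(x) + (c−1)u(−x)` for all `c ∈ F_p^*` and `x ∈ F_p^n`, then every
nonconstant monomial of `u` has total degree `d` with `d ≡ 0` or `d ≡ 1 (mod p−1)`. -/
theorem stmt7 (p n : ℕ) [Fact p.Prime] (hodd : Odd p)
    (u : MvPolynomial (Fin n) (ZMod p))
    (hdeg : ∀ m ∈ u.support, ∀ i : Fin n, m i ≤ p - 1)
    (heq : ∀ c : (ZMod p)ˣ, ∀ x : Fin n → ZMod p,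
      2 * (c : ZMod p) * MvPolynomial.eval (fun i => (c : ZMod p)⁻¹ * x i) u =
        ((c : ZMod p) + 1) * MvPolynomial.eval x u +
          ((c : ZMod p) - 1) * MvPolynomial.eval (fun i => -(x i)) u) :
    ∀ m ∈ u.support, m ≠ 0 →
      (∑ i : Fin n, m i) % (p - 1) = 0 ∨ (∑ i : Fin n, m i) % (p - 1) = 1 := by
  classical
  have hp : p.Prime := Fact.out
  have hp3 : 3 ≤ p := by
    obtain ⟨k, hk⟩ := hodd
    have := hp.two_le
    omega
  have h2 : (2 : ZMod p) ≠ 0 := by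
    intro h
    have h2' : (p : ℕ) ∣ 2 := (ZMod.natCast_eq_zero_iff 2 p).mp (by exact_mod_cast h)
    have := Nat.le_of_dvd two_pos h2'
    omega
  -- key: for every m in support and every unit c,
  -- 2*c*(c⁻¹)^d = (c+1) + (c-1)*(-1)^d where d = ∑ m i
  have key : ∀ m ∈ u.support, ∀ c : (ZMod p)ˣ,
      2 * (c : ZMod p) * ((c : ZMod p)⁻¹) ^ (∑ i, m i)
        = ((c : ZMod p) + 1) + ((c : ZMod p) - 1) * (-1 : ZMod p) ^ (∑ i, m i) := by
    intro m hm c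
    set G : (Fin n →₀ ℕ) → ZMod p := fun m =>
      2 * (c : ZMod p) * ((c : ZMod p)⁻¹) ^ (∑ i, m i)
        - (((c : ZMod p) + 1) + ((c : ZMod p) - 1) * (-1 : ZMod p) ^ (∑ i, m i)) with hG
    set q : MvPolynomial (Fin n) (ZMod p) :=
      ∑ m ∈ u.support, monomial m (u.coeff m * G m) with hq
    have hcoeff : ∀ m' ∈ u.support, q.coeff m' = u.coeff m' * G m' := by
      intro m' hm'
      rw [hq, MvPolynomial.coeff_sum]
      rw [Finset.sum_eq_single m']
      · simp [MvPolynomial.coeff_monomial]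
      · intro b _ hb; simp [MvPolynomial.coeff_monomial, hb]
      · intro h; exact absurd hm' h
    have hcoeff0 : ∀ m', m' ∉ u.support → q.coeff m' = 0 := by
      intro m' hm'
      rw [hq, MvPolynomial.coeff_sum]
      apply Finset.sum_eq_zero
      intro b hb
      have : b ≠ m' := fun h => hm' (h ▸ hb)
      simp [MvPolynomial.coeff_monomial, this]
    have hqsupp : q.support ⊆ u.support := by
      intro m' hm'
      by_contra h
      exact (MvPolynomial.mem_support_iff.mp hm') (hcoeff0 m' h)
    -- q evaluates to zero everywhere
    have heval : ∀ x : Fin n → ZMod p, MvPolynomial.eval x q = 0 := by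
      intro x
      have hc0 : (c : ZMod p) ≠ 0 := c.ne_zero
      have e1 : MvPolynomial.eval (fun i => (c : ZMod p)⁻¹ * x i) u
          = ∑ m ∈ u.support, u.coeff m * (((c : ZMod p)⁻¹) ^ (∑ i, m i) * ∏ i, x i ^ m i) := by
        rw [MvPolynomial.eval_eq']
        refine Finset.sum_congr rfl fun m _ => ?_
        rw [← Finset.prod_pow_eq_pow_sum, ← Finset.prod_mul_distrib]
        congr 1
        exact Finset.prod_congr rfl fun i _ => mul_pow _ _ _
      have e2 : MvPolynomial.eval (fun i => -(x i)) u
          = ∑ m ∈ u.support, u.coeff m * ((-1 : ZMod p) ^ (∑ i, m i) * ∏ i, x i ^ m i) := by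
        rw [MvPolynomial.eval_eq']
        refine Finset.sum_congr rfl fun m _ => ?_
        rw [← Finset.prod_pow_eq_pow_sum, ← Finset.prod_mul_distrib]
        congr 1
        exact Finset.prod_congr rfl fun i _ => neg_pow _ _
      have e3 : MvPolynomial.eval x u = ∑ m ∈ u.support, u.coeff m * ∏ i, x i ^ m i :=
        MvPolynomial.eval_eq' x u
      have e4 : MvPolynomial.eval x q
          = ∑ m ∈ u.support, (u.coeff m * G m) * ∏ i, x i ^ m i := by
        rw [hq, map_sum]
        refine Finset.sum_congr rfl fun m _ => ?_
        rw [MvPolynomial.eval_monomial]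
        congr 1
        rw [Finsupp.prod_fintype]
        intro i; simp
      have := heq c x
      rw [e1, e2, e3] at this
      rw [e4]
      rw [Finset.mul_sum, Finset.mul_sum, Finset.mul_sum, ← Finset.sum_add_distrib] at this
      have : ∑ m ∈ u.support,
          (2 * (c:ZMod p) * (u.coeff m * (((c:ZMod p)⁻¹) ^ (∑ i, m i) * ∏ i, x i ^ m i))
          - (((c:ZMod p) + 1) * (u.coeff m * ∏ i, x i ^ m i)
            + ((c:ZMod p) - 1) * (u.coeff m * ((-1:ZMod p) ^ (∑ i, m i) * ∏ i, x i ^ m i)))) = 0 := by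
        rw [Finset.sum_sub_distrib, this, sub_self]
      rw [← this]
      refine Finset.sum_congr rfl fun m _ => ?_
      rw [hG]; ring
    have hmem : q ∈ restrictDegree (Fin n) (ZMod p) (Fintype.card (ZMod p) - 1) := by
      rw [mem_restrictDegree]
      intro s hs i
      rw [ZMod.card]
      exact hdeg s (hqsupp hs) i
    have hq0 : q = 0 := MvPolynomial.eq_zero_of_eval_eq_zero (K := ZMod p) (σ := Fin n) q heval hmem
    have := hcoeff m hm
    rw [hq0] at this
    have hcu : u.coeff m ≠ 0 := MvPolynomial.mem_support_iff.mp hm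
    have hGm : G m = 0 := by
      rcases mul_eq_zero.mp this.symm with h | h
      · exact absurd h hcu
      · exact h
    rw [hG] at hGm
    linear_combination hGm
  intro m hm _
  -- get a generator of the unit group
  obtain ⟨g, hg⟩ := IsCyclic.exists_generator (α := (ZMod p)ˣ)
  have hcard : Fintype.card (ZMod p)ˣ = p - 1 := by
    rw [ZMod.card_units_eq_totient, Nat.totient_prime hp]
  have horder : orderOf g = p - 1 := by
    rw [orderOf_eq_card_of_forall_mem_zpowers hg, Nat.card_eq_fintype_card, hcard]
  set d := ∑ i, m i with hd
  have hpow : ∀ c : (ZMod p)ˣ, 2 * (c : ZMod p) * ((c : ZMod p)⁻¹) ^ d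
      = ((c : ZMod p) + 1) + ((c : ZMod p) - 1) * (-1 : ZMod p) ^ d := key m hm
  rcases Nat.even_or_odd d with hpar | hpar
  · left
    -- (-1)^d = 1, so 2c(c⁻¹)^d = 2c, so c^d = 1 for all c
    have hone : (g : ZMod p) ^ d = 1 := by
      have := hpow g
      rw [hpar.neg_one_pow] at this
      have hc0 : (g : ZMod p) ≠ 0 := g.ne_zero
      have h2c : 2 * (g : ZMod p) ≠ 0 := mul_ne_zero h2 hc0
      have : 2 * (g : ZMod p) * ((g : ZMod p)⁻¹) ^ d = 2 * (g : ZMod p) * 1 := by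
        rw [this]; ring
      have hinv : ((g : ZMod p)⁻¹) ^ d = 1 := mul_left_cancel₀ h2c this
      rw [inv_pow] at hinv
      exact inv_eq_one.mp hinv
    have hgd : g ^ d = 1 := Units.ext (by push_cast [hone]; rfl)
    have : (p - 1) ∣ d := horder ▸ orderOf_dvd_of_pow_eq_one hgd
    obtain ⟨k, hk⟩ := this
    simp [hk, Nat.mul_mod_right]
  · right
    have hone : (g : ZMod p) ^ (d - 1) = 1 := by
      have h0 := hpow g
      rw [hpar.neg_one_pow] at h0
      have hc0 : (g : ZMod p) ≠ 0 := g.ne_zero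
      rw [inv_pow] at h0
      have h0' : 2 * (g:ZMod p) * ((g:ZMod p)^d)⁻¹ = 2 := by rw [h0]; ring
      have hgd0 : (g:ZMod p)^d ≠ 0 := pow_ne_zero _ hc0
      have h1 : 2 * (g:ZMod p) = 2 * (g:ZMod p)^d := by
        calc 2*(g:ZMod p) = 2*(g:ZMod p)*(((g:ZMod p)^d)⁻¹ * (g:ZMod p)^d) := by
              rw [inv_mul_cancel₀ hgd0, mul_one]
          _ = (2*(g:ZMod p)*((g:ZMod p)^d)⁻¹) * (g:ZMod p)^d := by ring
          _ = 2 * (g:ZMod p)^d := by rw [h0']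
      have h2g : (g:ZMod p)^d = (g:ZMod p) := (mul_left_cancel₀ h2 h1).symm
      obtain ⟨j, hj⟩ := hpar
      have hgd : (g:ZMod p)^d = (g:ZMod p) * (g:ZMod p)^(d-1) := by
        rw [← pow_succ']
        congr 1
        omega
      have h3 : (g:ZMod p) * (g:ZMod p)^(d-1) = (g:ZMod p) * 1 := by
        rw [← hgd, h2g, mul_one]
      exact mul_left_cancel₀ hc0 h3
    have hgd : g ^ (d - 1) = 1 := Units.ext (by push_cast [hone]; rfl)
    have hdvd : (p - 1) ∣ (d - 1) := horder ▸ orderOf_dvd_of_pow_eq_one hgd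
    obtain ⟨k, hk⟩ := hdvd
    obtain ⟨j, hj⟩ := hpar
    have hd' : d = (p - 1) * k + 1 := by omega
    rw [hd', Nat.mul_add_mod]
    exact Nat.mod_eq_of_lt (by omega)
end

section
/- Let p be a prime, n even, m ≤ n/2 positive integers, V = V_n an n-dimensional and W = V_m an m-dimensional F_p-vector space. Let F : V → W be a vectorial bent function such that every component function F_c (c ∈ W, c ≠ 0) is weakly regular with the same sign ε ∈ {±1}, and suppose there are functions G : V → W and h : V → F_p with (F_c)*(x) = ⟨c, G(x)⟩ + h(x) for all c ≠ 0 and x ∈ V. Then for every a ∈ V and i ∈ W, the character sum over the fiber D_{F,i} = F^{-1}(i) satisfies χ_a(D_{F,i}) = p^{n−m}·[a = 0] + ε p^{n/2−m} ζ_p^{h(−a)} (p^m·[G(−a) = i] − 1). -/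
/-!
Expand the indicator of the fibre `F⁻¹(i)` by orthogonality of the characters `x ↦ ζ^{⟨c, x⟩}` of
`W`: this writes `p^m χ_a(F⁻¹(i))` as a sum over `c ∈ W` of Walsh transforms `W_{F_c}(-a)`.
The term `c = 0` is the character sum of all of `V`, i.e. `p^n [a = 0]`; for `c ≠ 0` the
hypothesis on the duals turns each transform into `ε p^{n/2} ζ^{h(-a)} ζ^{⟨c, G(-a)⟩}`, and
orthogonality in `W` once more evaluates the remaining sum over `c ≠ 0` to `p^m [G(-a) = i] - 1`.
-/

lemma Complex.exp_pow_val_eq_stdAddChar (N : ℕ) [NeZero N] (t : ZMod N) :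
    Complex.exp (2 * Real.pi * Complex.I / N) ^ t.val = ZMod.stdAddChar t := by
  rw [ZMod.stdAddChar_apply, ZMod.toCircle_apply, ← Complex.exp_nat_mul]
  ring_nf

section CharacterSums

open Finset Function

universe u v w

variable {R : Type u} {M : Type v} {N : Type w} [CommRing R] [AddCommGroup M] [Module R M]
  [Fintype M] [AddCommGroup N] [Module R N] {ψ : AddChar R ℂ}

theorem sum_addChar_linearMap_eq_ite (hψ : Injective ψ) (f : M →ₗ[R] R) [Decidable (f = 0)] :
    ∑ x, ψ (f x) = if f = 0 then (Fintype.card M : ℂ) else 0 := by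
  have hzero : ψ.compAddMonoidHom f.toAddMonoidHom = 0 ↔ f = 0 := by
    simp [AddChar.eq_zero_iff, LinearMap.ext_iff, ← hψ.eq_iff (b := 0)]
  classical
  simpa [hzero] using (ψ.compAddMonoidHom f.toAddMonoidHom).sum_eq_ite

omit [Fintype M] in
theorem LinearMap.SeparatingLeft.sum_addChar_eq_ite [Fintype N] (hψ : Injective ψ)
    {φ : M →ₗ[R] N →ₗ[R] R} (hφ : φ.SeparatingLeft) [DecidableEq M] (a : M) :
    ∑ y, ψ (φ a y) = if a = 0 then (Fintype.card N : ℂ) else 0 := by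
  classical
  have hker : φ a = 0 ↔ a = 0 :=
    ⟨fun h ↦ hφ a fun y ↦ by simp [h], fun h ↦ by simp [h]⟩
  simp only [sum_addChar_linearMap_eq_ite hψ, hker]

/-- Counting `∑ x ∑ y ψ (φ x y)` in both orders shows that the right kernel has one element. -/
theorem LinearMap.SeparatingLeft.separatingRight_of_injective_addChar (hψ : Injective ψ)
    {φ : M →ₗ[R] M →ₗ[R] R} (hφ : φ.SeparatingLeft) : φ.SeparatingRight := by
  classical
  set K := univ.filter fun y : M ↦ φ.flip y = 0
  have hrows : ∑ x, ∑ y, ψ (φ x y) = Fintype.card M := by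
    simp [hφ.sum_addChar_eq_ite hψ]
  have hcols : ∑ x, ∑ y, ψ (φ x y) = #K * Fintype.card M := by
    rw [sum_comm]
    simp only [← LinearMap.flip_apply (f := φ), sum_addChar_linearMap_eq_ite hψ, sum_ite,
      sum_const_zero, add_zero, sum_const, nsmul_eq_mul, K]
  have hK : #K ≤ 1 := by
    have hcard : (Fintype.card M : ℂ) ≠ 0 := Nat.cast_ne_zero.mpr Fintype.card_ne_zero
    have : (#K : ℂ) = 1 := by
      rw [← mul_left_inj' hcard, ← hcols, hrows, one_mul]
    exact (by exact_mod_cast this : #K = 1).le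
  intro y hy
  exact card_le_one.mp hK y (by simp [K, LinearMap.ext_iff, hy]) 0 (by simp [K])

theorem LinearMap.SeparatingLeft.sum_addChar_flip_eq_ite (hψ : Injective ψ)
    {φ : M →ₗ[R] M →ₗ[R] R} (hφ : φ.SeparatingLeft) [DecidableEq M] (w : M) :
    ∑ c, ψ (φ c w) = if w = 0 then (Fintype.card M : ℂ) else 0 :=
  (LinearMap.flip_separatingLeft.mpr
    (hφ.separatingRight_of_injective_addChar hψ)).sum_addChar_eq_ite hψ w

theorem LinearMap.SeparatingLeft.sum_erase_zero_addChar_eq (hψ : Injective ψ)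
    {φ : M →ₗ[R] M →ₗ[R] R} (hφ : φ.SeparatingLeft) [DecidableEq M] (w : M) :
    ∑ c ∈ univ.erase 0, ψ (φ c w) = (Fintype.card M : ℂ) * (if w = 0 then 1 else 0) - 1 := by
  rw [sum_erase_eq_sub (mem_univ 0), hφ.sum_addChar_flip_eq_ite hψ]
  simp

end CharacterSums

noncomputable def walshTransform {R V : Type*} [CommRing R] [AddCommGroup V] [Module R V]
    [Fintype V] (ψ : AddChar R ℂ) (B : V →ₗ[R] V →ₗ[R] R) (f : V → R) (a : V) : ℂ :=
  ∑ x, ψ (f x - B a x)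

section Fibres

open Finset Function

universe u v w

variable {R : Type u} {V : Type v} {W : Type w} [CommRing R] [AddCommGroup V] [Module R V]
  [Fintype V] [AddCommGroup W] [Module R W] [Fintype W] [DecidableEq W] {ψ : AddChar R ℂ}
  {φV : V →ₗ[R] V →ₗ[R] R} {φW : W →ₗ[R] W →ₗ[R] R}

theorem card_mul_sum_fibre_eq_sum_walshTransform (hψ : Injective ψ) (hφW : φW.SeparatingLeft)
    (F : V → W) (a : V) (i : W) :
    Fintype.card W * ∑ x ∈ univ.filter (F · = i), ψ (φV a x) =
      ∑ c, ψ (-φW c i) * walshTransform ψ φV (fun x ↦ φW c (F x)) (-a) := by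
  have hindicator : ∀ x, (if F x = i then (Fintype.card W : ℂ) else 0) =
      ∑ c, ψ (φW c (F x - i)) := fun x ↦ by
    simp only [hφW.sum_addChar_flip_eq_ite hψ, sub_eq_zero]
  simp only [walshTransform, sum_filter, mul_sum]
  rw [sum_comm]
  refine sum_congr rfl fun x _ ↦ ?_
  rw [mul_ite_zero, ← ite_zero_mul, hindicator, sum_mul]
  refine sum_congr rfl fun c _ ↦ ?_
  rw [← AddChar.map_add_eq_mul, ← AddChar.map_add_eq_mul]
  simp only [map_sub, map_neg, LinearMap.neg_apply]
  ring_nf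

theorem card_mul_sum_fibre_of_walshTransform_eq [DecidableEq V] (hψ : Injective ψ)
    (hφV : φV.SeparatingLeft) (hφW : φW.SeparatingLeft) (F : V → W) (a : V) (i : W) (κ : ℂ)
    (g : W) (t : R)
    (hwalsh : ∀ c ≠ 0, walshTransform ψ φV (fun x ↦ φW c (F x)) (-a) = κ * ψ (φW c g + t)) :
    Fintype.card W * ∑ x ∈ univ.filter (F · = i), ψ (φV a x) =
      Fintype.card V * (if a = 0 then 1 else 0) +
        κ * ψ t * (Fintype.card W * (if g = i then 1 else 0) - 1) := by
  have hzero : walshTransform ψ φV (fun x ↦ φW 0 (F x)) (-a) =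
      Fintype.card V * (if a = 0 then 1 else 0) := by
    simp [walshTransform, hφV.sum_addChar_eq_ite hψ]
  have hrest : ∑ c ∈ univ.erase 0, ψ (-φW c i) * walshTransform ψ φV (fun x ↦ φW c (F x)) (-a) =
      κ * ψ t * ∑ c ∈ univ.erase 0, ψ (φW c (g - i)) := by
    rw [mul_sum]
    refine sum_congr rfl fun c hc ↦ ?_
    rw [hwalsh c (ne_of_mem_erase hc), mul_left_comm, mul_assoc, ← AddChar.map_add_eq_mul,
      ← AddChar.map_add_eq_mul, map_sub]
    ring_nf
  rw [card_mul_sum_fibre_eq_sum_walshTransform hψ hφW, ← add_sum_erase _ _ (mem_univ 0), hrest,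
    hzero, hφW.sum_erase_zero_addChar_eq hψ]
  simp [sub_eq_zero]

end Fibres

theorem stmt9_general (p n m : ℕ) [NeZero p]
    (hmn : m ≤ n / 2)
    (V W : Type*) [AddCommGroup V] [Module (ZMod p) V] [Fintype V] [DecidableEq V]
    [AddCommGroup W] [Module (ZMod p) W] [Fintype W] [DecidableEq W]
    (hcV : Fintype.card V = p ^ n) (hcW : Fintype.card W = p ^ m)
    (φV : V →ₗ[ZMod p] V →ₗ[ZMod p] ZMod p)
    (hndV : ∀ v : V, (∀ w : V, φV v w = 0) → v = 0)
    (φW : W →ₗ[ZMod p] W →ₗ[ZMod p] ZMod p)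
    (hndW : ∀ v : W, (∀ w : W, φW v w = 0) → v = 0)
    (F G : V → W) (h : V → ZMod p) (ε : ℂ)
    (hW : ∀ c : W, c ≠ 0 → ∀ a : V,
      ∑ x : V, Complex.exp (2 * Real.pi * Complex.I / p) ^ ((φW c (F x) - φV a x).val) =
        ε * (p : ℂ) ^ (n / 2) *
          Complex.exp (2 * Real.pi * Complex.I / p) ^ ((φW c (G a) + h a).val)) :
    ∀ (a : V) (i : W),
      ∑ x ∈ Finset.univ.filter (fun x : V => F x = i),
          Complex.exp (2 * Real.pi * Complex.I / p) ^ ((φV a x).val) =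
        (p : ℂ) ^ (n - m) * (if a = 0 then 1 else 0) +
          ε * (p : ℂ) ^ (n / 2 - m) *
            Complex.exp (2 * Real.pi * Complex.I / p) ^ ((h (-a)).val) *
            ((p : ℂ) ^ m * (if G (-a) = i then 1 else 0) - 1) := by
  intro a i
  simp only [Complex.exp_pow_val_eq_stdAddChar] at hW ⊢
  have hfibre := card_mul_sum_fibre_of_walshTransform_eq ZMod.injective_stdAddChar hndV hndW F a i
    (ε * (p : ℂ) ^ (n / 2)) (G (-a)) (h (-a)) fun c hc ↦ hW c hc (-a)
  simp only [hcV, hcW, Nat.cast_pow] at hfibre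
  have hp : (p : ℂ) ^ m ≠ 0 := pow_ne_zero m (Nat.cast_ne_zero.mpr (NeZero.ne p))
  have hpn : (p : ℂ) ^ m * (p : ℂ) ^ (n - m) = (p : ℂ) ^ n := by
    rw [← pow_add]; congr 1; omega
  have hpn2 : (p : ℂ) ^ m * (p : ℂ) ^ (n / 2 - m) = (p : ℂ) ^ (n / 2) := by
    rw [← pow_add]; congr 1; omega
  refine mul_left_cancel₀ hp ?_
  rw [hfibre, ← hpn, ← hpn2]
  ring

/-- Let `F : V → W` be a vectorial bent function (`dim V = n` even,
`dim W = m ≤ n/2`) all of whose component functions `F_c` (`c ≠ 0`) are weakly regular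
with the same sign `ε` and duals `(F_c)*(x) = ⟨c, G(x)⟩ + h(x)`. Then for all `a ∈ V`,
`i ∈ W`:
`χ_a(F⁻¹(i)) = p^{n−m}·[a = 0] + ε p^{n/2−m} ζ_p^{h(−a)} (p^m·[G(−a) = i] − 1)`. -/
theorem stmt9 (p n m : ℕ) [Fact p.Prime] [NeZero p] (hn : Even n) (hm : 0 < m)
    (hmn : m ≤ n / 2)
    (V W : Type*) [AddCommGroup V] [Module (ZMod p) V] [Fintype V] [DecidableEq V]
    [AddCommGroup W] [Module (ZMod p) W] [Fintype W] [DecidableEq W]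
    (hcV : Fintype.card V = p ^ n) (hcW : Fintype.card W = p ^ m)
    (φV : V →ₗ[ZMod p] V →ₗ[ZMod p] ZMod p)
    (hndV : ∀ v : V, (∀ w : V, φV v w = 0) → v = 0)
    (φW : W →ₗ[ZMod p] W →ₗ[ZMod p] ZMod p)
    (hndW : ∀ v : W, (∀ w : W, φW v w = 0) → v = 0)
    (F G : V → W) (h : V → ZMod p) (ε : ℂ) (hε : ε = 1 ∨ ε = -1)
    (hW : ∀ c : W, c ≠ 0 → ∀ a : V,
      ∑ x : V, Complex.exp (2 * Real.pi * Complex.I / p) ^ ((φW c (F x) - φV a x).val) =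
        ε * (p : ℂ) ^ (n / 2) *
          Complex.exp (2 * Real.pi * Complex.I / p) ^ ((φW c (G a) + h a).val)) :
    ∀ (a : V) (i : W),
      ∑ x ∈ Finset.univ.filter (fun x : V => F x = i),
          Complex.exp (2 * Real.pi * Complex.I / p) ^ ((φV a x).val) =
        (p : ℂ) ^ (n - m) * (if a = 0 then 1 else 0) +
          ε * (p : ℂ) ^ (n / 2 - m) *
            Complex.exp (2 * Real.pi * Complex.I / p) ^ ((h (-a)).val) *
            ((p : ℂ) ^ m * (if G (-a) = i then 1 else 0) - 1) :=
  stmt9_general p n m hmn V W hcV hcW φV hndV φW hndW F G h ε hW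
end

section
/- Let p be a prime, n even, and f : V → F_p a function on an n-dimensional F_p-vector space V such that for every a ∈ V and j ∈ F_p, χ_a(D_{f,j}) = p^{n−1}[a=0] + ε p^{n/2−1} ζ_p^{h(−a)}(p·[g(a)=j] − 1) for some functions g, h : V → F_p and constant ε ∈ {±1}. Then f is a weakly regular bent function with W_f(−a) = ε p^{n/2} ζ_p^{h(−a)+g(a)} for all a ∈ V. -/
/-- If `f : V → F_p` (`dim V = n` even) satisfies, for all `a, j`,
`χ_a(f⁻¹(j)) = p^{n−1}[a=0] + ε p^{n/2−1} ζ_p^{h(−a)}(p·[g(a)=j] − 1)` for some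
`g, h : V → F_p` and `ε ∈ {±1}`, then `f` is weakly regular bent with
`W_f(−a) = ε p^{n/2} ζ_p^{h(−a)+g(a)}` for all `a`. -/
theorem stmt10 (p n : ℕ) [Fact p.Prime] [NeZero p] (hn : Even n) (hpos : 0 < n)
    (V : Type*) [AddCommGroup V] [Module (ZMod p) V] [Fintype V] [DecidableEq V]
    (hcard : Fintype.card V = p ^ n)
    (φ : V →ₗ[ZMod p] V →ₗ[ZMod p] ZMod p)
    (hnd : ∀ v : V, (∀ w : V, φ v w = 0) → v = 0)
    (f g h : V → ZMod p) (ε : ℂ) (hε : ε = 1 ∨ ε = -1)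
    (hchi : ∀ (a : V) (j : ZMod p),
      ∑ x ∈ Finset.univ.filter (fun x : V => f x = j),
          Complex.exp (2 * Real.pi * Complex.I / p) ^ ((φ a x).val) =
        (p : ℂ) ^ (n - 1) * (if a = 0 then 1 else 0) +
          ε * (p : ℂ) ^ (n / 2 - 1) *
            Complex.exp (2 * Real.pi * Complex.I / p) ^ ((h (-a)).val) *
            ((p : ℂ) * (if g a = j then 1 else 0) - 1)) :
    ∀ a : V,
      ∑ x : V, Complex.exp (2 * Real.pi * Complex.I / p) ^ ((f x - φ (-a) x).val) =
        ε * (p : ℂ) ^ (n / 2) *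
          Complex.exp (2 * Real.pi * Complex.I / p) ^ ((h (-a) + g a).val) := by
  intro a
  set ζ : ℂ := Complex.exp (2 * Real.pi * Complex.I / p) with hζdef
  have hp0 : (p : ℕ) ≠ 0 := NeZero.ne p
  have hprim : IsPrimitiveRoot ζ p := Complex.isPrimitiveRoot_exp p hp0
  have hζp : ζ ^ p = 1 := hprim.pow_eq_one
  have hzadd : ∀ u v : ZMod p, ζ ^ (u + v).val = ζ ^ u.val * ζ ^ v.val := by
    intro u v
    rw [← pow_add, ZMod.val_add]
    conv_rhs => rw [← Nat.mod_add_div (u.val + v.val) p, pow_add, pow_mul, hζp, one_pow, mul_one]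
  have hsum0 : ∑ j : ZMod p, ζ ^ j.val = 0 := by
    have h2 : 1 < p := (Fact.out (p := p.Prime)).one_lt
    have := hprim.geom_sum_eq_zero h2
    rw [← this]
    refine Finset.sum_nbij' (fun j : ZMod p => j.val) (fun i => (i : ZMod p)) ?_ ?_ ?_ ?_ ?_
    · intro j _; exact Finset.mem_range.mpr (ZMod.val_lt j)
    · intro i _; exact Finset.mem_univ _
    · intro j _; simp [ZMod.natCast_val, ZMod.cast_id]
    · intro i hi; exact ZMod.val_cast_of_lt (Finset.mem_range.mp hi)
    · intro j _; rfl
  -- rewrite exponent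
  have hexp : ∀ x : V, (f x - φ (-a) x) = f x + φ a x := by
    intro x
    simp [map_neg, sub_neg_eq_add]
  have step1 : ∑ x : V, ζ ^ ((f x - φ (-a) x).val)
      = ∑ j : ZMod p, ζ ^ j.val * ∑ x ∈ Finset.univ.filter (fun x : V => f x = j),
          ζ ^ ((φ a x).val) := by
    rw [← Finset.sum_fiberwise_of_maps_to (g := f) (fun x _ => Finset.mem_univ (f x))]
    refine Finset.sum_congr rfl fun j _ => ?_
    rw [Finset.mul_sum]
    refine Finset.sum_congr rfl fun x hx => ?_
    have hfx : f x = j := (Finset.mem_filter.mp hx).2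
    rw [hexp x, hfx, hzadd]
  rw [step1]
  have key : ∀ j : ZMod p,
      ζ ^ j.val * ((p : ℂ) ^ (n - 1) * (if a = 0 then 1 else 0) +
        ε * (p : ℂ) ^ (n / 2 - 1) * ζ ^ ((h (-a)).val) *
          ((p : ℂ) * (if g a = j then 1 else 0) - 1))
      = (p : ℂ) ^ (n - 1) * (if a = 0 then 1 else 0) * ζ ^ j.val
        + ε * (p : ℂ) ^ (n / 2 - 1) * ζ ^ ((h (-a)).val) * (p : ℂ) *
            (if g a = j then ζ ^ j.val else 0)
        - ε * (p : ℂ) ^ (n / 2 - 1) * ζ ^ ((h (-a)).val) * ζ ^ j.val := by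
    intro j
    by_cases hj : g a = j <;> simp only [hj, if_true, if_false, mul_ite, ite_mul, mul_zero, zero_mul, mul_one, one_mul] <;> split_ifs <;> ring
  calc ∑ j : ZMod p, ζ ^ j.val * ∑ x ∈ Finset.univ.filter (fun x : V => f x = j),
          ζ ^ ((φ a x).val)
      = ∑ j : ZMod p, ((p : ℂ) ^ (n - 1) * (if a = 0 then 1 else 0) * ζ ^ j.val
        + ε * (p : ℂ) ^ (n / 2 - 1) * ζ ^ ((h (-a)).val) * (p : ℂ) *
            (if g a = j then ζ ^ j.val else 0)
        - ε * (p : ℂ) ^ (n / 2 - 1) * ζ ^ ((h (-a)).val) * ζ ^ j.val) := by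
        refine Finset.sum_congr rfl fun j _ => ?_
        rw [hchi a j, key j]
    _ = ε * (p : ℂ) ^ (n / 2) * ζ ^ ((h (-a) + g a).val) := by
        rw [Finset.sum_sub_distrib, Finset.sum_add_distrib, ← Finset.mul_sum,
          ← Finset.mul_sum, ← Finset.mul_sum, hsum0, Finset.sum_ite_eq]
        simp only [Finset.mem_univ, if_true, mul_zero, zero_add, sub_zero]
        rw [hzadd]
        obtain ⟨k, hk⟩ := hn
        have hn2 : 1 ≤ n / 2 := by omega
        have : (p : ℂ) ^ (n / 2) = (p : ℂ) ^ (n / 2 - 1) * (p : ℂ) := by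
          rw [← pow_succ]
          congr 1
          omega
        rw [this]
        ring
end

section
/- Let n be even and suppose Γ = {A_1, …, A_K} is a bent partition of an n-dimensional F_2-vector space V (K even). Then K divides 2^{n/2}; in particular, the depth K of any Boolean bent partition is a power of 2. -/
open Finset

lemma core (K h : ℕ) (hh : K = 2 * h) (hh1 : 1 ≤ h) (e : ℤ) (he : 0 < e)
    (s : Fin K → ℤ) (htot : ∑ i, s i = 0)
    (hsum : ∀ S : Finset (Fin K), S.card = h →
      (∑ i ∈ S, s i = e ∨ ∑ i ∈ S, s i = -e)) :
    (K : ℤ) ∣ 2 * e := by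
  have hK2 : 2 ≤ K := by omega
  obtain ⟨i0, -, hi0⟩ := Finset.exists_min_image univ s ⟨⟨0, by omega⟩, mem_univ _⟩
  set x := s i0 with hx
  -- every value is x or x + 2e
  have key : ∀ i : Fin K, s i = x ∨ s i = x + 2 * e := by
    intro i
    by_cases hii : i = i0
    · left; rw [hii]
    · have hcard2 : ({i, i0} : Finset (Fin K)).card = 2 := by
        rw [card_insert_of_notMem (by simp [hii]), card_singleton]
      obtain ⟨S', hS'sub, hS'card⟩ :=
        Finset.exists_subset_card_eq (s := (univ : Finset (Fin K)) \ {i, i0}) (n := h - 1)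
          (by rw [card_sdiff_of_subset (subset_univ _), hcard2, card_univ, Fintype.card_fin]; omega)
      have hiS' : i ∉ S' := fun hmem => by
        have h5 := hS'sub hmem; simp at h5
      have hi0S' : i0 ∉ S' := fun hmem => by
        have h5 := hS'sub hmem; simp at h5
      have hc1 : (insert i S').card = h := by
        rw [card_insert_of_notMem hiS', hS'card]; omega
      have hc2 : (insert i0 S').card = h := by
        rw [card_insert_of_notMem hi0S', hS'card]; omega
      have e1 := hsum _ hc1
      have e2 := hsum _ hc2
      rw [sum_insert hiS'] at e1
      rw [sum_insert hi0S'] at e2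
      have hle : x ≤ s i := hi0 i (mem_univ i)
      rcases e1 with e1 | e1 <;> rcases e2 with e2 | e2 <;> omega
  classical
  set B := univ.filter (fun i : Fin K => s i = x + 2 * e) with hB
  set b := B.card with hb
  have hi0B : i0 ∉ B := by
    simp only [hB, mem_filter]
    rintro ⟨-, h2⟩; omega
  have hbK : b ≤ K - 1 := by
    have : B ⊆ univ.erase i0 := fun j hj => mem_erase.mpr ⟨fun hji => hi0B (hji ▸ hj), mem_univ _⟩
    have := card_le_card this
    rw [card_erase_of_mem (mem_univ _), card_univ, Fintype.card_fin] at this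
    omega
  have hEq0 : (K : ℤ) * x + 2 * e * b = 0 := by
    have : ∑ i, s i = ∑ i : Fin K, (x + if i ∈ B then 2 * e else 0) := by
      apply Finset.sum_congr rfl
      intro i _
      by_cases hiB : i ∈ B
      · simp only [hiB, if_pos]
        exact (mem_filter.mp hiB).2
      · simp only [hiB, if_neg, not_false_iff, add_zero]
        rcases key i with h1 | h1
        · exact h1
        · exact absurd (mem_filter.mpr ⟨mem_univ i, h1⟩) hiB
    rw [htot] at this
    rw [Finset.sum_add_distrib, Finset.sum_const, Finset.sum_ite_mem, univ_inter,
      Finset.sum_const, card_univ, Fintype.card_fin] at this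
    rw [hb]
    simp only [nsmul_eq_mul] at this
    linarith
  have hb1 : 1 ≤ b := by
    by_contra hcon
    have hb0 : b = 0 := by omega
    have hx0 : x = 0 := by
      have hK0 : (K:ℤ) ≠ 0 := by positivity
      have h6 := hEq0
      rw [hb0] at h6
      push_cast at h6
      have h7 : (K:ℤ) * x = 0 := by linarith
      exact (mul_eq_zero.mp h7).resolve_left hK0
    obtain ⟨S, hSsub, hScard⟩ :=
      Finset.exists_subset_card_eq (s := (univ : Finset (Fin K))) (n := h)
        (by rw [card_univ, Fintype.card_fin]; omega)
    have hSsum : ∑ i ∈ S, s i = 0 := by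
      apply Finset.sum_eq_zero
      intro i _
      rcases key i with h1 | h1
      · rw [h1, hx0]
      · exfalso
        have h8 : i ∈ B := mem_filter.mpr ⟨mem_univ i, h1⟩
        have h9 : 0 < b := card_pos.mpr ⟨i, h8⟩
        omega
    rcases hsum S hScard with h1 | h1 <;> omega
  by_cases hcase : h ≤ b
  · -- choose S ⊆ B of card h
    obtain ⟨S, hSsub, hScard⟩ := Finset.exists_subset_card_eq (s := B) (n := h) hcase
    have hSsum : ∑ i ∈ S, s i = (h : ℤ) * (x + 2 * e) := by
      rw [Finset.sum_congr rfl (fun i hi => (mem_filter.mp (hSsub hi)).2),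
        Finset.sum_const, hScard, nsmul_eq_mul]
    have hK' : (K : ℤ) = 2 * h := by exact_mod_cast congrArg Nat.cast hh
    rcases hsum S hScard with h1 | h1 <;> rw [hSsum] at h1
    · -- h(x+2e) = e ; 2hx + 2eb = 0 ⇒ b = 2h - 1
      have hbeq : 2 * e * ((2:ℤ) * h - b - 1) = 0 := by
        rw [hK'] at hEq0; ring_nf; ring_nf at hEq0 h1; linarith
      have : ((2:ℤ) * h - b - 1) = 0 := by
        rcases mul_eq_zero.mp hbeq with h2 | h2
        · omega
        · exact h2
      refine ⟨x + 2 * e, ?_⟩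
      rw [hK'] at hEq0 ⊢
      have hbval : (b : ℤ) = 2 * h - 1 := by omega
      rw [hbval] at hEq0
      ring_nf; ring_nf at hEq0; linarith
    · have hbeq : 2 * e * ((2:ℤ) * h - b + 1) = 0 := by
        rw [hK'] at hEq0; ring_nf; ring_nf at hEq0 h1; linarith
      have : ((2:ℤ) * h - b + 1) = 0 := by
        rcases mul_eq_zero.mp hbeq with h2 | h2
        · omega
        · exact h2
      exfalso
      have hble : (b:ℤ) ≤ (K:ℤ) - 1 := by omega
      rw [hK'] at hble; omega
  · -- b < h : take S = B ∪ S' with S' ⊆ Bᶜ of card h - b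
    push_neg at hcase
    obtain ⟨S', hS'sub, hS'card⟩ :=
      Finset.exists_subset_card_eq (s := Bᶜ) (n := h - b)
        (by rw [card_compl, Fintype.card_fin]; omega)
    have hdisjBS' : Disjoint B S' := by
      refine Finset.disjoint_left.mpr fun j hjB hjS' => ?_
      exact (mem_compl.mp (hS'sub hjS')) hjB
    have hScard : (B ∪ S').card = h := by
      rw [card_union_of_disjoint hdisjBS', hS'card]; omega
    have hSsum : ∑ i ∈ B ∪ S', s i = (b : ℤ) * (x + 2 * e) + ((h : ℤ) - b) * x := by
      rw [Finset.sum_union hdisjBS']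
      have h1 : ∑ i ∈ B, s i = (b:ℤ) * (x + 2*e) := by
        rw [Finset.sum_congr rfl (fun i hi => (mem_filter.mp hi).2),
          Finset.sum_const, nsmul_eq_mul]
      have h2 : ∑ i ∈ S', s i = ((h:ℤ) - b) * x := by
        have : ∀ i ∈ S', s i = x := by
          intro i hi
          rcases key i with hk | hk
          · exact hk
          · exact absurd (mem_filter.mpr ⟨mem_univ i, hk⟩) (mem_compl.mp (hS'sub hi))
        rw [Finset.sum_congr rfl this, Finset.sum_const, hS'card, nsmul_eq_mul]
        have : ((h - b : ℕ) : ℤ) = (h:ℤ) - b := by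
          omega
        rw [this]
      rw [h1, h2]
    have hK' : (K : ℤ) = 2 * h := by exact_mod_cast congrArg Nat.cast hh
    rcases hsum _ hScard with h1 | h1 <;> rw [hSsum] at h1
    · -- hx + 2eb = e, 2hx + 2eb = 0 ⇒ ... ⇒ 2e(b-1)=0 ⇒ b=1 ⇒ 2hx = -2e
      have hbeq : 2 * e * ((b:ℤ) - 1) = 0 := by
        rw [hK'] at hEq0; ring_nf; ring_nf at hEq0 h1; linarith
      have hbval : (b : ℤ) = 1 := by
        rcases mul_eq_zero.mp hbeq with h2 | h2
        · omega
        · omega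
      refine ⟨-x, ?_⟩
      rw [hK'] at hEq0 ⊢
      rw [hbval] at hEq0
      ring_nf; ring_nf at hEq0; linarith
    · have hbeq : 2 * e * ((b:ℤ) + 1) = 0 := by
        rw [hK'] at hEq0; ring_nf; ring_nf at hEq0 h1; linarith
      exfalso
      rcases mul_eq_zero.mp hbeq with h2 | h2
      · omega
      · have : (1:ℤ) ≤ b := by exact_mod_cast hb1
        omega

/-- If `Γ = {A_1, …, A_K}` is a bent partition of an `n`-dimensional
`F_2`-vector space `V` (`n` even, `K` even), i.e. every Boolean function whose two
fibers are each a union of exactly `K/2` of the parts is bent, then `K ∣ 2^{n/2}`;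
in particular `K` is a power of `2`. -/
theorem stmt12 (n K : ℕ) (hn : Even n) (hK : Even K) (hKpos : 0 < K)
    (V : Type*) [AddCommGroup V] [Module (ZMod 2) V] [Fintype V] [DecidableEq V]
    (hcard : Fintype.card V = 2 ^ n)
    (φ : V →ₗ[ZMod 2] V →ₗ[ZMod 2] ZMod 2)
    (hnd : ∀ v : V, (∀ w : V, φ v w = 0) → v = 0)
    (A : Fin K → Finset V)
    (hne : ∀ i : Fin K, (A i).Nonempty)
    (hdisj : ∀ i j : Fin K, i ≠ j → Disjoint (A i) (A j))
    (hcover : ∀ x : V, ∃ i : Fin K, x ∈ A i)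
    (hbent : ∀ S : Finset (Fin K), S.card = K / 2 → ∀ a : V,
      |∑ x : V,
        (-1 : ℝ) ^ ((((if x ∈ S.biUnion A then (0 : ZMod 2) else 1)) + φ a x).val)| =
        (2 : ℝ) ^ (n / 2)) :
    K ∣ 2 ^ (n / 2) ∧ ∃ t : ℕ, K = 2 ^ t := by
  classical
  obtain ⟨m, hm⟩ := hn
  obtain ⟨k0, hk0⟩ := hK
  have hK2 : 2 ≤ K := by omega
  have hn2 : n / 2 = m := by omega
  -- K ≥ 2 so there are two distinct indices; V is nontrivial (m ≥ 1)
  have hm1 : 1 ≤ m := by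
    by_contra hm0
    have hm0' : m = 0 := by omega
    have hcard1 : Fintype.card V = 1 := by
      rw [hcard, hm]
      have : m = 0 := by omega
      rw [this]
      norm_num
    have hsub : Subsingleton V := Fintype.card_le_one_iff_subsingleton.mp (le_of_eq hcard1)
    obtain ⟨x, hx⟩ := hne ⟨0, hKpos⟩
    obtain ⟨y, hy⟩ := hne ⟨1, hK2⟩
    have hxy : x = y := Subsingleton.elim x y
    have hne01 : (⟨0, hKpos⟩ : Fin K) ≠ ⟨1, hK2⟩ := by simp
    exact (Finset.disjoint_left.mp (hdisj _ _ hne01)) hx (hxy ▸ hy)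
  -- get nonzero a
  have hnontriv : 1 < Fintype.card V := by
    rw [hcard]
    calc 1 < 2 ^ 1 := by norm_num
    _ ≤ 2 ^ n := Nat.pow_le_pow_right (by norm_num) (by omega)
  have : Nontrivial V := Fintype.one_lt_card_iff_nontrivial.mp hnontriv
  obtain ⟨a, ha⟩ := exists_ne (0 : V)
  -- get w with φ a w = 1
  have hex : ∃ w, φ a w ≠ 0 := by
    by_contra hcon
    push_neg at hcon
    exact ha (hnd a hcon)
  obtain ⟨w, hw0⟩ := hex
  have hone : ∀ v : ZMod 2, v ≠ 0 → v = 1 := by decide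
  have hw : φ a w = 1 := hone _ hw0
  -- character sum is zero
  have hflip : ∀ v : ZMod 2, (-1:ℤ)^((v + 1).val) = -(-1:ℤ)^(v.val) := by decide
  have hchar : ∑ x : V, (-1:ℤ)^((φ a x).val) = 0 := by
    have hsh : ∑ x : V, (-1:ℤ)^((φ a (x + w)).val) = ∑ x : V, (-1:ℤ)^((φ a x).val) :=
      Fintype.sum_equiv (Equiv.addRight w) _ _ (fun x => rfl)
    have hneg : ∀ x : V, (-1:ℤ)^((φ a (x + w)).val) = -(-1:ℤ)^((φ a x).val) := by
      intro x
      rw [map_add, hw, hflip]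
    rw [Finset.sum_congr rfl (fun x _ => hneg x), Finset.sum_neg_distrib] at hsh
    linarith
  -- partition sums
  set s : Fin K → ℤ := fun i => ∑ x ∈ A i, (-1:ℤ)^((φ a x).val) with hs
  have hpart : ∀ (S : Finset (Fin K)) (g : V → ℤ),
      ∑ x ∈ S.biUnion A, g x = ∑ i ∈ S, ∑ x ∈ A i, g x := by
    intro S g
    apply Finset.sum_biUnion
    intro i _ j _ hij
    exact hdisj i j hij
  have huniv : (univ : Finset (Fin K)).biUnion A = univ := by
    ext x
    simp only [mem_biUnion, mem_univ, true_and, iff_true]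
    exact hcover x
  have htot : ∑ i : Fin K, s i = 0 := by
    rw [hs]
    rw [← hpart univ (fun x => (-1:ℤ)^((φ a x).val)), huniv, hchar]
  -- mixed exponent lemma
  have hmix : ∀ u v : ZMod 2, (-1:ℤ)^((u+v).val) = (-1:ℤ)^(u.val) * (-1:ℤ)^(v.val) := by decide
  -- per-subset sums
  have hsubset : ∀ S : Finset (Fin K), S.card = K / 2 →
      (∑ i ∈ S, s i = 2^(m-1) ∨ ∑ i ∈ S, s i = -2^(m-1)) := by
    intro S hS
    have hb := hbent S hS a
    set B := S.biUnion A with hBdef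
    -- rewrite the real sum as cast of integer sum
    have hcast : (∑ x : V, (-1 : ℝ) ^ (((if x ∈ B then (0:ZMod 2) else 1) + φ a x).val))
        = ((∑ x : V, (-1 : ℤ) ^ (((if x ∈ B then (0:ZMod 2) else 1) + φ a x).val) : ℤ) : ℝ) := by
      push_cast
      rfl
    have hint : ∑ x : V, (-1 : ℤ) ^ (((if x ∈ B then (0:ZMod 2) else 1) + φ a x).val)
        = 2 * ∑ i ∈ S, s i := by
      have hpt : ∀ x : V, (-1 : ℤ) ^ (((if x ∈ B then (0:ZMod 2) else 1) + φ a x).val)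
          = 2 * (if x ∈ B then (-1:ℤ)^((φ a x).val) else 0) - (-1:ℤ)^((φ a x).val) := by
        intro x
        by_cases hxB : x ∈ B
        · rw [if_pos hxB, if_pos hxB, zero_add]
          ring
        · rw [if_neg hxB, if_neg hxB, add_comm, hflip]
          ring
      rw [Finset.sum_congr rfl (fun x _ => hpt x), Finset.sum_sub_distrib, hchar, sub_zero,
        ← Finset.mul_sum, Finset.sum_ite_mem, univ_inter, hBdef, hpart]
    rw [hcast, hint] at hb
    -- now |((2 * T : ℤ) : ℝ)| = 2 ^ (n/2)
    have habs : |(2 * ∑ i ∈ S, s i : ℤ)| = 2 ^ m := by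
      rw [← Int.cast_abs, hn2] at hb
      exact_mod_cast hb
    rcases abs_eq (a := 2 * ∑ i ∈ S, s i) (b := (2:ℤ)^m) (by positivity) |>.mp habs with h1 | h1
    · left
      have hp : (2:ℤ)^m = 2 * 2^(m-1) := by
        rw [← pow_succ']
        congr 1
        omega
      rw [hp] at h1
      linarith
    · right
      have hp : (2:ℤ)^m = 2 * 2^(m-1) := by
        rw [← pow_succ']
        congr 1
        omega
      rw [hp] at h1
      linarith
  -- apply the core lemma
  have hKdvd : (K : ℤ) ∣ 2 * 2^(m-1) := by
    apply core K (K/2) (by omega) (by omega) (2^(m-1)) (by positivity) s htot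
    intro S hS
    exact hsubset S hS
  have hp : (2:ℤ) * 2^(m-1) = 2^m := by
    rw [← pow_succ']
    congr 1
    omega
  rw [hp] at hKdvd
  have hdvd : K ∣ 2 ^ m := by exact_mod_cast hKdvd
  rw [hn2]
  refine ⟨hdvd, ?_⟩
  obtain ⟨t, -, ht⟩ := (Nat.dvd_prime_pow Nat.prime_two).mp hdvd
  exact ⟨t, ht⟩
end

section
/- Let Γ = {A_i : i ∈ W} be a partition of V indexed by W, with F : V → W defined by F(x) = i iff x ∈ A_i. Then Γ is a bent partition if and only if for every permutation P of W, P ∘ F is a vectorial bent function from V to W. -/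
/-!
A map `f` whose fibres are unions of `p^(m-1)` blocks of `Γ` is `F` followed by a labelling of
the blocks meeting `range F`, with at most `p^(m-1)` blocks per label. Sending these blocks
injectively into the matching fibres of a nonzero functional `⟨c, ·⟩` (each of size `p^(m-1)`)
and extending to a permutation `P` of `W` gives `f = ⟨c, P ∘ F⟩`. Conversely each component
`⟨c, P ∘ F⟩` is such a map, again because the fibres of `⟨c, ·⟩` have size `p^(m-1)`.
-/

open Finset Function

lemma AddMonoidHom.card_fiber_mul_card_of_surjective {G H : Type*} [AddGroup G] [Fintype G]
    [AddMonoid H] [Fintype H] [DecidableEq H] (f : G →+ H) (hf : Surjective f) (y : H) :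
    #{g | f g = y} * Fintype.card H = Fintype.card G := by
  have h := card_eq_sum_card_fiberwise (s := univ) (t := univ) (f := f)
    fun _ _ => mem_coe.2 (mem_univ _)
  rw [card_univ] at h
  rw [h, sum_congr rfl fun y' _ => AddMonoidHom.card_fiber_eq_of_mem_range f (hf y') (hf y),
    sum_const, card_univ, smul_eq_mul, mul_comm]

lemma LinearMap.card_fiber_of_ne_zero {K W : Type*} [Field K] [Fintype K] [DecidableEq K]
    [AddCommGroup W] [Module K W] [Fintype W] {m : ℕ} (hW : Fintype.card W = Fintype.card K ^ m)
    {L : W →ₗ[K] K} (hL : L ≠ 0) (j : K) :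
    #{w | L w = j} = Fintype.card K ^ (m - 1) := by
  have h := L.toAddMonoidHom.card_fiber_mul_card_of_surjective (LinearMap.surjective hL) j
  have hK : 1 < Fintype.card K := Fintype.one_lt_card
  rcases m with _ | m
  · rw [hW, pow_zero] at h
    exact absurd (Nat.eq_one_of_mul_eq_one_left h) hK.ne'
  · rw [hW, pow_succ] at h
    exact Nat.eq_of_mul_eq_mul_right (by omega) h

lemma exists_embedding_comp_eq_of_card_fiber_le {α β ι : Type*} [Fintype α] [Fintype β]
    [DecidableEq ι] {g : α → ι} {h : β → ι} (hc : ∀ j, #{a | g a = j} ≤ #{b | h b = j}) :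
    ∃ e : α ↪ β, ∀ a, h (e a) = g a := by
  classical
  have he : ∀ j, Nonempty ({a // g a = j} ↪ {b // h b = j}) := fun j =>
    Embedding.nonempty_of_card_le (by simpa only [Fintype.card_subtype] using hc j)
  let e := fun j => (he j).some
  exact ⟨(Equiv.sigmaFiberEquiv g).symm.toEmbedding.trans
    ((Embedding.sigmaMap (Embedding.refl ι) e).trans (Equiv.sigmaFiberEquiv h).toEmbedding),
    fun a => (e (g a) ⟨a, rfl⟩).2⟩

theorem exists_perm_comp_eq_of_card_le {α β ι : Type*} [Fintype β] [DecidableEq ι]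
    (F : α → β) (f : α → ι) (h : β → ι) (S : ι → Finset β)
    (hS : ∀ j, #(S j) ≤ #{b | h b = j}) (hfS : ∀ j x, f x = j ↔ F x ∈ S j) :
    ∃ P : Equiv.Perm β, ∀ x, h (P (F x)) = f x := by
  classical
  have hfac : FactorsThrough f F := fun a b hab => (hfS (f b) a).2 (hab ▸ (hfS (f b) b).1 rfl)
  let g : Set.range F → ι := fun t => extend F f h t
  have hg : ∀ x, g ⟨F x, x, rfl⟩ = f x := fun x => hfac.extend_apply h x
  obtain ⟨e, he⟩ := exists_embedding_comp_eq_of_card_fiber_le (g := g) (h := h) fun j => by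
    refine le_trans ?_ (hS j)
    refine card_le_card_of_injOn Subtype.val (fun t ht => ?_) Subtype.val_injective.injOn
    obtain ⟨_, x, rfl⟩ := t
    rw [mem_coe, mem_filter, hg] at ht
    exact (hfS j x).1 ht.2
  obtain ⟨P, hP⟩ := Equiv.Perm.exists_extending_pair Subtype.val e Subtype.val_injective e.injective
  exact ⟨P, fun x => by rw [hP ⟨F x, x, rfl⟩, he, hg]⟩

theorem stmt15_general (p n m : ℕ) [Fact p.Prime] (hm : 0 < m)
    (V W : Type*) [AddCommGroup V] [Module (ZMod p) V] [Fintype V]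
    [AddCommGroup W] [Module (ZMod p) W] [Fintype W]
    (hcW : Fintype.card W = p ^ m)
    (φV : V →ₗ[ZMod p] V →ₗ[ZMod p] ZMod p)
    (φW : W →ₗ[ZMod p] W →ₗ[ZMod p] ZMod p)
    (hndW : ∀ v : W, (∀ w : W, φW v w = 0) → v = 0)
    (F : V → W) :
    (∀ f : V → ZMod p,
        (∀ j : ZMod p, ∃ S : Finset W, S.card = p ^ (m - 1) ∧
          ∀ x : V, f x = j ↔ F x ∈ S) →
        ∀ a : V,
          ‖∑ x : V,
            Complex.exp (2 * Real.pi * Complex.I / p) ^ ((f x - φV a x).val)‖ =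
            (p : ℝ) ^ (n / 2)) ↔
      (∀ P : Equiv.Perm W, ∀ c : W, c ≠ 0 → ∀ a : V,
        ‖∑ x : V,
          Complex.exp (2 * Real.pi * Complex.I / p) ^
            ((φW c (P (F x)) - φV a x).val)‖ = (p : ℝ) ^ (n / 2)) := by
  classical
  have hφW : ∀ c, c ≠ 0 → φW c ≠ 0 := fun c hc h0 => hc (hndW c fun w => by simp [h0])
  have hfiber : ∀ c, c ≠ 0 → ∀ j, #{w | φW c w = j} = p ^ (m - 1) := fun c hc j => by
    simpa only [ZMod.card] using (φW c).card_fiber_of_ne_zero (by rwa [ZMod.card]) (hφW c hc) j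
  constructor
  · intro hbent P c hc a
    refine hbent (fun x => φW c (P (F x))) (fun j => ?_) a
    refine ⟨({w | φW c w = j} : Finset W).map P.symm.toEmbedding, ?_, fun x => ?_⟩
    · rw [card_map, hfiber c hc]
    · simp [mem_map_equiv]
  · intro hvec f hf a
    choose S hS hfS using hf
    have : Nontrivial W := Fintype.one_lt_card_iff_nontrivial.mp
      (hcW ▸ Nat.one_lt_pow hm.ne' (Fact.out : p.Prime).one_lt)
    obtain ⟨c, hc⟩ := exists_ne (0 : W)
    obtain ⟨P, hP⟩ := exists_perm_comp_eq_of_card_le F f (φW c) S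
      (fun j => by rw [hS, hfiber c hc]) hfS
    simpa only [hP] using hvec P c hc a

/-- With `F : V → W` inducing the partition `Γ = {F⁻¹(i) : i ∈ W}`,
`Γ` is a bent partition if and only if for every permutation `P` of `W`, `P ∘ F` is a
vectorial bent function (every nonzero component `x ↦ ⟨c, P(F(x))⟩` is bent). -/
theorem stmt15 (p n m : ℕ) [Fact p.Prime] [NeZero p] (hn : Even n) (hm : 0 < m)
    (V W : Type*) [AddCommGroup V] [Module (ZMod p) V] [Fintype V]
    [AddCommGroup W] [Module (ZMod p) W] [Fintype W] [DecidableEq W]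
    (hcV : Fintype.card V = p ^ n) (hcW : Fintype.card W = p ^ m)
    (φV : V →ₗ[ZMod p] V →ₗ[ZMod p] ZMod p)
    (hndV : ∀ v : V, (∀ w : V, φV v w = 0) → v = 0)
    (φW : W →ₗ[ZMod p] W →ₗ[ZMod p] ZMod p)
    (hndW : ∀ v : W, (∀ w : W, φW v w = 0) → v = 0)
    (F : V → W) :
    (∀ f : V → ZMod p,
        (∀ j : ZMod p, ∃ S : Finset W, S.card = p ^ (m - 1) ∧
          ∀ x : V, f x = j ↔ F x ∈ S) →
        ∀ a : V,
          ‖∑ x : V,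
            Complex.exp (2 * Real.pi * Complex.I / p) ^ ((f x - φV a x).val)‖ =
            (p : ℝ) ^ (n / 2)) ↔
      (∀ P : Equiv.Perm W, ∀ c : W, c ≠ 0 → ∀ a : V,
        ‖∑ x : V,
          Complex.exp (2 * Real.pi * Complex.I / p) ^
            ((φW c (P (F x)) - φV a x).val)‖ = (p : ℝ) ^ (n / 2)) :=
  stmt15_general p n m hm V W hcW φV φW hndW F
end

section
/- Let p be an odd prime, n even, and f : V → F_p a weakly regular bent function on an n-dimensional F_p-vector space V satisfying c·f*(c^{-1}x) = ((c+1)f*(x) + (c−1)f*(−x))/2 for all c ∈ F_p^* and x ∈ V. Then setting g(x) = (f*(x)+f*(−x))/2 and h(x) = (f*(x)−f*(−x))/2, for every permutation B of F_p the function B ∘ f is weakly regular bent with W_{B∘f}(−a) = ε_f p^{n/2} ζ_p^{B(g(−a)) + h(−a)} for all a ∈ V. Consequently, the preimage partition {f^{-1}(i) : i ∈ F_p} is a bent partition of V. -/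
/-!
Write `ψ j = ζ ^ j.val` for the standard additive character of `𝔽_p`. Fourier inversion on `𝔽_p`
gives `p ψ(B y) = ∑_c B̂(c) ψ(c y)` with `B̂(c) = ∑_j ψ(B j - c j)`, so `p W_{B∘f}(-a)` is the
combination `∑_c B̂(c) W_{cf}(-a)` of the Walsh transforms of the multiples of `f`; the term
`c = 0` vanishes because `B` is a permutation. For `c ≠ 0`, the Galois automorphism `ζ ↦ ζ^c`
(available because `ζ` and `ζ^c` have the same minimal polynomial `Φ_p` over `ℚ`) turns weak
regularity of `f` into `W_{cf}(a) = ε p^{n/2} ζ^{c f*(c⁻¹ a)}`, which the hypothesis on `f*`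
rewrites as `ε p^{n/2} ψ(c g(-a) + h(-a))`. Fourier inversion, now read backwards, collapses the
combination to `p ε p^{n/2} ψ(B(g(-a)) + h(-a))`.
-/

open Finset Polynomial

namespace AddChar

variable {R K : Type*} [CommRing R] [Fintype R] [CommRing K] [IsDomain K]
  {ψ : AddChar R K}

theorem card_mul_apply_comp_eq_sum (hψ : ψ.IsPrimitive) (B : R → R) (y : R) :
    (Fintype.card R : K) * ψ (B y) = ∑ c, (∑ j, ψ (B j - c * j)) * ψ (c * y) := by
  classical
  calc (Fintype.card R : K) * ψ (B y)
      = ∑ j, ψ (B j) * ∑ c, ψ (c * (y - j)) := by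
        simp_rw [sum_mulShift _ hψ, sub_eq_zero, Nat.cast_ite, Nat.cast_zero, mul_ite, mul_zero,
          sum_ite_eq, mem_univ, if_true, mul_comm]
    _ = ∑ c, (∑ j, ψ (B j - c * j)) * ψ (c * y) := by
        simp_rw [mul_sum, sum_mul]
        rw [sum_comm]
        refine sum_congr rfl fun c _ => sum_congr rfl fun j _ => ?_
        rw [← map_add_eq_mul, ← map_add_eq_mul]
        congr 1
        ring

theorem card_mul_sum_apply_comp_sub {V : Type*} [Fintype V] (hψ : ψ.IsPrimitive)
    (B : R → R) (F L : V → R) :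
    (Fintype.card R : K) * ∑ x, ψ (B (F x) - L x) =
      ∑ c, (∑ j, ψ (B j - c * j)) * ∑ x, ψ (c * F x - L x) := by
  have hsub (z w : R) : ψ (z - w) = ψ z * ψ (-w) := by rw [sub_eq_add_neg, map_add_eq_mul]
  simp_rw [hsub _ (L _), mul_sum, ← mul_assoc, card_mul_apply_comp_eq_sum hψ, sum_mul]
  exact sum_comm

theorem sum_apply_comp_eq_zero_of_bijective [Nontrivial R] (hψ : ψ.IsPrimitive) {B : R → R}
    (hB : B.Bijective) : ∑ j, ψ (B j) = 0 := by
  classical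
  rw [Fintype.sum_bijective B hB (fun j => ψ (B j)) ψ fun _ => rfl]
  simpa using sum_mulShift (1 : R) hψ

theorem sum_apply_comp_sub_eq_of_bijective [Nontrivial R] [CharZero K] (hψ : ψ.IsPrimitive)
    {B : R → R} (hB : B.Bijective) {V : Type*} [Fintype V] (F L : V → R) (k : K) (g h : R)
    (hF : ∀ c ≠ 0, ∑ x, ψ (c * F x - L x) = k * ψ (c * g + h)) :
    ∑ x, ψ (B (F x) - L x) = k * ψ (B g + h) := by
  have hcard : (Fintype.card R : K) ≠ 0 := Nat.cast_ne_zero.mpr Fintype.card_ne_zero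
  have hcoeff (c : R) : (∑ j, ψ (B j - c * j)) * ∑ x, ψ (c * F x - L x) =
      k * ψ h * ((∑ j, ψ (B j - c * j)) * ψ (c * g)) := by
    rcases eq_or_ne c 0 with rfl | hc
    · simp_rw [zero_mul, sub_zero, sum_apply_comp_eq_zero_of_bijective hψ hB, zero_mul, mul_zero]
    · rw [hF c hc, map_add_eq_mul]
      ring
  refine mul_left_cancel₀ hcard ?_
  rw [card_mul_sum_apply_comp_sub hψ, sum_congr rfl fun c _ => hcoeff c, ← mul_sum,
    ← card_mul_apply_comp_eq_sum hψ, map_add_eq_mul]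
  ring

end AddChar

theorem IsPrimitiveRoot.aeval_pow_eq_zero_of_coprime {K : Type*} [Field K] [CharZero K]
    {ζ : K} {n : ℕ} (hn : 0 < n) (hζ : IsPrimitiveRoot ζ n) {k : ℕ} (hk : k.Coprime n)
    {q : ℚ[X]} (hq : aeval ζ q = 0) : aeval (ζ ^ k) q = 0 := by
  rw [← minpoly.dvd_iff] at hq ⊢
  rwa [← cyclotomic_eq_minpoly_rat (hζ.pow_of_coprime k hk) hn, cyclotomic_eq_minpoly_rat hζ hn]

theorem IsPrimitiveRoot.sum_pow_val_units_mul {K : Type*} [Field K] [CharZero K] {ζ : K}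
    {n : ℕ} [NeZero n] (hζ : IsPrimitiveRoot ζ n) {ι : Type*} (s : Finset ι) (u : ι → ZMod n)
    (r : ℚ) (t : ZMod n) (h : ∑ i ∈ s, ζ ^ (u i).val = r * ζ ^ t.val) (c : (ZMod n)ˣ) :
    ∑ i ∈ s, ζ ^ ((c : ZMod n) * u i).val = r * ζ ^ ((c : ZMod n) * t).val := by
  have hmul (j : ZMod n) : ζ ^ ((c : ZMod n) * j).val = (ζ ^ (c : ZMod n).val) ^ j.val := by
    rw [ZMod.val_mul, ← pow_eq_pow_mod _ hζ.pow_eq_one, pow_mul]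
  set q : ℚ[X] := ∑ i ∈ s, X ^ (u i).val - C r * X ^ t.val
  have hq : aeval ζ q = 0 := by simp [q, h]
  have := hζ.aeval_pow_eq_zero_of_coprime (NeZero.pos n) (ZMod.val_coe_unit_coprime c) hq
  simpa [q, hmul, sub_eq_zero] using this

theorem IsPrimitiveRoot.sum_pow_val_units_mul_sub {K : Type*} [Field K] [CharZero K] {ζ : K}
    {n : ℕ} [NeZero n] (hζ : IsPrimitiveRoot ζ n) {V : Type*} [AddCommGroup V]
    [Module (ZMod n) V] [Fintype V] (φ : V →ₗ[ZMod n] V →ₗ[ZMod n] ZMod n)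
    (f fstar : V → ZMod n) (r : ℚ)
    (hW : ∀ a, ∑ x, ζ ^ (f x - φ a x).val = r * ζ ^ (fstar a).val) (c : (ZMod n)ˣ) (a : V) :
    ∑ x, ζ ^ ((c : ZMod n) * f x - φ a x).val = r * ζ ^ ((c : ZMod n) * fstar (c⁻¹ • a)).val := by
  convert hζ.sum_pow_val_units_mul univ _ r _ (hW (c⁻¹ • a)) c using 4 with x
  rw [Units.smul_def, map_smul, LinearMap.smul_apply, smul_eq_mul, mul_sub, ← mul_assoc,
    Units.mul_inv, one_mul]

theorem stmt17_general (p n : ℕ) [Fact p.Prime]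
    (V : Type*) [AddCommGroup V] [Module (ZMod p) V] [Fintype V]
    (φ : V →ₗ[ZMod p] V →ₗ[ZMod p] ZMod p)
    (f fstar : V → ZMod p) (ε : ℂ) (hε : ε = 1 ∨ ε = -1)
    (hW : ∀ a : V,
      ∑ x : V, Complex.exp (2 * Real.pi * Complex.I / p) ^ ((f x - φ a x).val) =
        ε * (p : ℂ) ^ (n / 2) *
          Complex.exp (2 * Real.pi * Complex.I / p) ^ ((fstar a).val))
    (hcond : ∀ c : (ZMod p)ˣ, ∀ x : V,
      (c : ZMod p) * fstar (((c : ZMod p)⁻¹) • x) =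
        (((c : ZMod p) + 1) * fstar x + ((c : ZMod p) - 1) * fstar (-x)) / 2) :
    (∀ B : Equiv.Perm (ZMod p), ∀ a : V,
      ∑ x : V, Complex.exp (2 * Real.pi * Complex.I / p) ^ ((B (f x) - φ (-a) x).val) =
        ε * (p : ℂ) ^ (n / 2) *
          Complex.exp (2 * Real.pi * Complex.I / p) ^
            ((B ((fstar (-a) + fstar a) / 2) + (fstar (-a) - fstar a) / 2).val)) ∧
    (∀ B : Equiv.Perm (ZMod p), ∀ a : V,
      ‖∑ x : V,
        Complex.exp (2 * Real.pi * Complex.I / p) ^ ((B (f x) - φ a x).val)‖ =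
        (p : ℝ) ^ (n / 2)) := by
  set ζ := Complex.exp (2 * Real.pi * Complex.I / p)
  have hζ : IsPrimitiveRoot ζ p := Complex.isPrimitiveRoot_exp p (NeZero.ne p)
  obtain ⟨r, hr⟩ : ∃ r : ℚ, (r : ℂ) = ε * (p : ℂ) ^ (n / 2) := by
    rcases hε with rfl | rfl
    exacts [⟨p ^ (n / 2), by push_cast; ring⟩, ⟨-p ^ (n / 2), by push_cast; ring⟩]
  rw [← hr] at hW ⊢
  have hcomp (B : Equiv.Perm (ZMod p)) (a : V) :
      ∑ x, ζ ^ (B (f x) - φ (-a) x).val =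
        r * ζ ^ (B ((fstar (-a) + fstar a) / 2) + (fstar (-a) - fstar a) / 2).val := by
    refine AddChar.sum_apply_comp_sub_eq_of_bijective (ψ := AddChar.zmodChar p hζ.pow_eq_one)
      (AddChar.zmodChar_primitive_of_primitive_root p hζ) B.bijective f (φ (-a)) _ _ _
      fun c hc => ?_
    obtain ⟨c, rfl⟩ := IsUnit.mk0 c hc
    simp only [AddChar.zmodChar_apply]
    rw [hζ.sum_pow_val_units_mul_sub φ f fstar r hW,
      Units.smul_def, Units.val_inv_eq_inv_val, hcond, neg_neg]
    congr 3
    ring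
  refine ⟨hcomp, fun B a => ?_⟩
  have hnorm (j : ZMod p) : ‖ζ ^ j.val‖ = 1 := by
    rw [norm_pow, hζ.norm'_eq_one (NeZero.ne p), one_pow]
  rw [← neg_neg a, hcomp, hr, norm_mul, norm_mul, hnorm, norm_pow, Complex.norm_natCast]
  rcases hε with rfl | rfl <;> simp

/-- Let `p` be an odd prime, `n` even, and `f : V → F_p` weakly regular
bent (`W_f(a) = ε p^{n/2} ζ_p^{f*(a)}`, `ε ∈ {±1}`) with
`c·f*(c⁻¹x) = ((c+1)f*(x) + (c−1)f*(−x))/2` for all `c ∈ F_p^*`. Setting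
`g(x) = (f*(x)+f*(−x))/2` and `h(x) = (f*(x)−f*(−x))/2`, for every permutation `B` of
`F_p` the function `B ∘ f` is weakly regular bent with
`W_{B∘f}(−a) = ε p^{n/2} ζ_p^{B(g(−a)) + h(−a)}`; consequently the preimage partition
`{f⁻¹(i)}` is a bent partition (every `B ∘ f` is bent). -/
theorem stmt17 (p n : ℕ) [Fact p.Prime] [NeZero p] (hodd : Odd p) (hn : Even n)
    (hpos : 0 < n)
    (V : Type*) [AddCommGroup V] [Module (ZMod p) V] [Fintype V]
    (hcard : Fintype.card V = p ^ n)
    (φ : V →ₗ[ZMod p] V →ₗ[ZMod p] ZMod p)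
    (hnd : ∀ v : V, (∀ w : V, φ v w = 0) → v = 0)
    (f fstar : V → ZMod p) (ε : ℂ) (hε : ε = 1 ∨ ε = -1)
    (hW : ∀ a : V,
      ∑ x : V, Complex.exp (2 * Real.pi * Complex.I / p) ^ ((f x - φ a x).val) =
        ε * (p : ℂ) ^ (n / 2) *
          Complex.exp (2 * Real.pi * Complex.I / p) ^ ((fstar a).val))
    (hcond : ∀ c : (ZMod p)ˣ, ∀ x : V,
      (c : ZMod p) * fstar (((c : ZMod p)⁻¹) • x) =
        (((c : ZMod p) + 1) * fstar x + ((c : ZMod p) - 1) * fstar (-x)) / 2) :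
    (∀ B : Equiv.Perm (ZMod p), ∀ a : V,
      ∑ x : V, Complex.exp (2 * Real.pi * Complex.I / p) ^ ((B (f x) - φ (-a) x).val) =
        ε * (p : ℂ) ^ (n / 2) *
          Complex.exp (2 * Real.pi * Complex.I / p) ^
            ((B ((fstar (-a) + fstar a) / 2) + (fstar (-a) - fstar a) / 2).val)) ∧
    (∀ B : Equiv.Perm (ZMod p), ∀ a : V,
      ‖∑ x : V,
        Complex.exp (2 * Real.pi * Complex.I / p) ^ ((B (f x) - φ a x).val)‖ =
        (p : ℝ) ^ (n / 2)) :=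
  stmt17_general p n V φ f fstar ε hε hW hcond
end

section
/- Let p be a prime, W an m-dimensional F_p-vector space, h : U → F_p a function on a set U, and suppose duals (F_c)* : U → F_p (for c ∈ W, c ≠ 0) satisfy the cocycle-type relation (F_d)*(x) − (F_e)*(x) − (F_{d−e})*(x) = −h(x) for all d ≠ e nonzero in W and x ∈ U. Then there exists a function G : U → W such that (F_c)*(x) = ⟨c, G(x)⟩ + h(x) for all nonzero c ∈ W and x ∈ U. -/
/-! Shifting by `h`, the relation says that `c ↦ (F_c)*(x) - h(x)`, extended by `0` at `c = 0`,
is additive whenever both summands and the sum are nonzero. Such a partial additivity extends to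
all of `W` (the case `a + b = 0` reduces to `f (-a) = -f a`), so for each `x` we get an additive,
hence `𝔽_p`-linear, functional on `W`, and non-degeneracy of `⟨·,·⟩` represents it as
`⟨·, G(x)⟩`. -/

section PartialAdditivity

variable {W M : Type*} [AddCommGroup W] [AddCommGroup M] {f : W → M}

theorem map_neg_of_map_add_of_ne_zero (K : Type*) [Field K] [Module K W] [Module K M]
    (hf : ∀ a b : W, a ≠ 0 → b ≠ 0 → a + b ≠ 0 → f (a + b) = f a + f b)
    {a : W} (ha : a ≠ 0) : f (-a) = -f a := by
  by_cases h2a : a + a = 0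
  · -- `a` has order two, so the characteristic is two and `f a` has order two as well
    have h2 : (2 : K) = 0 := by
      by_contra h2
      exact ha ((smul_eq_zero.mp (by rwa [two_smul] : (2 : K) • a = 0)).resolve_left h2)
    have hfa : f a + f a = 0 := by rw [← two_smul K, h2, zero_smul]
    rw [neg_eq_of_add_eq_zero_right h2a, neg_eq_of_add_eq_zero_right hfa]
  · have hsplit : f a = f (a + a) + f (-a) := by
      simpa using hf (a + a) (-a) h2a (neg_ne_zero.mpr ha) (by simpa using ha)
    rw [hf a a ha ha h2a] at hsplit
    linear_combination (norm := abel) -hsplit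

theorem map_add_of_map_add_of_ne_zero (K : Type*) [Field K] [Module K W] [Module K M]
    (hf0 : f 0 = 0)
    (hf : ∀ a b : W, a ≠ 0 → b ≠ 0 → a + b ≠ 0 → f (a + b) = f a + f b) (a b : W) :
    f (a + b) = f a + f b := by
  rcases eq_or_ne a 0 with rfl | ha
  · simp [hf0]
  rcases eq_or_ne b 0 with rfl | hb
  · simp [hf0]
  rcases eq_or_ne (a + b) 0 with hab | hab
  · rw [hab, hf0, eq_neg_of_add_eq_zero_right hab, map_neg_of_map_add_of_ne_zero K hf ha,
      add_neg_cancel]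
  · exact hf a b ha hb hab

end PartialAdditivity

theorem LinearMap.BilinForm.exists_forall_apply_eq_of_separatingLeft {K V : Type*} [Field K]
    [AddCommGroup V] [Module K V] [FiniteDimensional K V] {B : LinearMap.BilinForm K V}
    (hB : B.SeparatingLeft) (ℓ : Module.Dual K V) : ∃ g : V, ∀ c : V, B c g = ℓ c := by
  have hflip : B.flip.Nondegenerate := (Nondegenerate.ofSeparatingLeft hB).flip
  exact ⟨(B.flip.toDual hflip).symm ℓ, apply_toDual_symm_apply (hB := hflip) ℓ⟩

theorem stmt19_general (p : ℕ) [Fact p.Prime]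
    (W : Type*) [AddCommGroup W] [Module (ZMod p) W] [FiniteDimensional (ZMod p) W]
    (φ : W →ₗ[ZMod p] W →ₗ[ZMod p] ZMod p)
    (hnd : ∀ v : W, (∀ w : W, φ v w = 0) → v = 0)
    (U : Type*) (h : U → ZMod p) (Fstar : W → U → ZMod p)
    (hrel : ∀ d e : W, d ≠ 0 → e ≠ 0 → d ≠ e → ∀ x : U,
      Fstar d x - Fstar e x - Fstar (d - e) x = -(h x)) :
    ∃ G : U → W, ∀ c : W, c ≠ 0 → ∀ x : U, Fstar c x = φ c (G x) + h x := by
  classical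
  let f : U → W → ZMod p := fun x c => if c = 0 then 0 else Fstar c x - h x
  have hf_add : ∀ x, ∀ a b : W, a ≠ 0 → b ≠ 0 → a + b ≠ 0 → f x (a + b) = f x a + f x b := by
    intro x a b ha hb hab
    have hr := hrel (a + b) a hab ha (by simpa using hb) x
    rw [add_sub_cancel_left] at hr
    simp only [f, if_neg ha, if_neg hb, if_neg hab]
    linear_combination hr
  let L : U → Module.Dual (ZMod p) W := fun x => AddMonoidHom.toZModLinearMap p
    (AddMonoidHom.mk' (f x) (map_add_of_map_add_of_ne_zero (ZMod p) (if_pos rfl) (hf_add x)))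
  choose G hG using fun x => LinearMap.BilinForm.exists_forall_apply_eq_of_separatingLeft hnd (L x)
  refine ⟨G, fun c hc x => ?_⟩
  rw [hG x c]
  simp [L, f, hc]

/-- If the duals `(F_c)* : U → F_p` (`c ∈ W`, `c ≠ 0`, `W` an
`m`-dimensional `F_p`-vector space) satisfy
`(F_d)*(x) − (F_e)*(x) − (F_{d−e})*(x) = −h(x)` for all nonzero `d ≠ e` and all `x`,
then there is a function `G : U → W` with `(F_c)*(x) = ⟨c, G(x)⟩ + h(x)` for all
nonzero `c` and all `x`, where `⟨·,·⟩` is a non-degenerate bilinear form on `W`. -/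
theorem stmt19 (p m : ℕ) [Fact p.Prime]
    (W : Type*) [AddCommGroup W] [Module (ZMod p) W] [FiniteDimensional (ZMod p) W]
    (hdim : Module.finrank (ZMod p) W = m)
    (φ : W →ₗ[ZMod p] W →ₗ[ZMod p] ZMod p)
    (hnd : ∀ v : W, (∀ w : W, φ v w = 0) → v = 0)
    (U : Type*) (h : U → ZMod p) (Fstar : W → U → ZMod p)
    (hrel : ∀ d e : W, d ≠ 0 → e ≠ 0 → d ≠ e → ∀ x : U,
      Fstar d x - Fstar e x - Fstar (d - e) x = -(h x)) :
    ∃ G : U → W, ∀ c : W, c ≠ 0 → ∀ x : U, Fstar c x = φ c (G x) + h x :=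
  stmt19_general p W φ hnd U h Fstar hrel
end
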